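/- arXiv:0803.2803 — 2 statements merged into one kernel-verified Lean document; each statement's English description precedes it below -/
import Mathlib

section
/- Let (F_n) be the Fibonacci numbers. For every integer n ≥ 0, F_{2n+1} = Σ_{j∈ℤ} [ C(2n, n−5j) − C(2n, n−5j−2) ], where the sum runs over all integers j (only finitely many terms are nonzero). -/
/-!
Put `S_n(r) = Σ_j C(2n, n - 5j + r)`. The symmetry `C(2n, n + k) = C(2n, n - k)` makes `S_n` even
in `r`, and it is `5`-periodic in `r`, so `S_n` takes only the values `S_n(0)`, `S_n(1)`, `S_n(2)`.
Applying Pascal's rule twice gives `S_{n+1}(r) = S_n(r + 1) + 2 S_n(r) + S_n(r - 1)`, whence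
`(S_n(0) - S_n(2), S_n(1) - S_n(2))` obeys the recurrence `(a, b) ↦ (2a + b, a + b)` of
`(F_{2n+1}, F_{2n})` and starts at `(1, 0)`.
-/

/-- Binomial coefficient `C(m, j)` with integer lower index `j`,
equal to `0` when `j < 0` or `j > m`. -/
def ichoose (m : ℕ) (j : ℤ) : ℚ :=
  if j < 0 then 0 else (m.choose j.toNat : ℚ)

lemma ichoose_eq_zero_of_neg {m : ℕ} {j : ℤ} (h : j < 0) : ichoose m j = 0 := if_pos h

lemma ichoose_eq_zero_of_lt {m : ℕ} {j : ℤ} (h : (m : ℤ) < j) : ichoose m j = 0 := by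
  rw [ichoose, if_neg (by omega), Nat.cast_eq_zero, Nat.choose_eq_zero_iff]
  omega

lemma support_ichoose_subset (m : ℕ) : Function.support (ichoose m) ⊆ Set.Icc 0 (m : ℤ) := by
  intro j hj
  by_contra h
  rcases not_and_or.mp h with h | h
  exacts [hj (ichoose_eq_zero_of_neg (not_le.mp h)), hj (ichoose_eq_zero_of_lt (not_le.mp h))]

lemma ichoose_zero_right (m : ℕ) : ichoose m 0 = 1 := by
  simp [ichoose]

lemma ichoose_zero_left_of_ne {j : ℤ} (h : j ≠ 0) : ichoose 0 j = 0 :=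
  Function.notMem_support.mp fun hj => h <| by simpa using support_ichoose_subset 0 hj

lemma ichoose_succ (m : ℕ) (j : ℤ) :
    ichoose (m + 1) j = ichoose m j + ichoose m (j - 1) := by
  rcases lt_trichotomy j 0 with h | rfl | h
  · simp [ichoose_eq_zero_of_neg h, ichoose_eq_zero_of_neg (show j - 1 < 0 by omega)]
  · simp [ichoose]
  · obtain ⟨k, rfl⟩ : ∃ k : ℕ, j = k + 1 := ⟨(j - 1).toNat, by omega⟩
    simp only [ichoose, add_sub_cancel_right]
    rw [if_neg (by omega), if_neg (by omega), if_neg (by omega),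
      show ((k : ℤ) + 1).toNat = k + 1 by omega, Int.toNat_natCast, Nat.choose_succ_succ']
    push_cast
    ring

lemma ichoose_add_two (m : ℕ) (j : ℤ) :
    ichoose (m + 2) j = ichoose m j + 2 * ichoose m (j - 1) + ichoose m (j - 2) := by
  rw [ichoose_succ, ichoose_succ, ichoose_succ, sub_sub, one_add_one_eq_two]
  ring

lemma ichoose_symm (m : ℕ) (j : ℤ) : ichoose m (m - j) = ichoose m j := by
  rcases lt_or_ge j 0 with h | h
  · rw [ichoose_eq_zero_of_neg h, ichoose_eq_zero_of_lt (by omega)]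
  rcases lt_or_ge (m : ℤ) j with h' | h'
  · rw [ichoose_eq_zero_of_lt h', ichoose_eq_zero_of_neg (by omega)]
  simp only [ichoose]
  rw [if_neg (by omega), if_neg (by omega), show ((m : ℤ) - j).toNat = m - j.toNat by omega,
    Nat.choose_symm (by omega)]

lemma ichoose_two_mul_add_eq_sub (n : ℕ) (k : ℤ) :
    ichoose (2 * n) (n + k) = ichoose (2 * n) (n - k) := by
  rw [← ichoose_symm]
  push_cast
  ring_nf

noncomputable def centeredChooseSum (p : ℤ) (n : ℕ) (r : ℤ) : ℚ :=
  ∑ᶠ j : ℤ, ichoose (2 * n) (n - p * j + r)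

namespace centeredChooseSum

lemma summand_hasFiniteSupport {p : ℤ} (hp : p ≠ 0) (n : ℕ) (r : ℤ) :
    Function.HasFiniteSupport fun j : ℤ => ichoose (2 * n) (n - p * j + r) := by
  have hinj : Function.Injective fun j : ℤ => (n : ℤ) - p * j + r := fun a b h => by
    simpa [hp] using h
  exact ((Set.finite_Icc 0 ((2 * n : ℕ) : ℤ)).preimage hinj.injOn).subset
    fun j hj => support_ichoose_subset _ hj

lemma neg (p : ℤ) (n : ℕ) (r : ℤ) : centeredChooseSum p n (-r) = centeredChooseSum p n r := by
  rw [centeredChooseSum, ← finsum_comp_equiv (Equiv.neg ℤ)]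
  refine finsum_congr fun j => ?_
  rw [Equiv.neg_apply]
  convert ichoose_two_mul_add_eq_sub n (p * j - r) using 2 <;> ring

lemma add_period (p : ℤ) (n : ℕ) (r : ℤ) :
    centeredChooseSum p n (r + p) = centeredChooseSum p n r := by
  rw [centeredChooseSum, ← finsum_comp_equiv (Equiv.addRight 1)]
  refine finsum_congr fun j => ?_
  rw [Equiv.coe_addRight]
  ring_nf

lemma succ {p : ℤ} (hp : p ≠ 0) (n : ℕ) (r : ℤ) :
    centeredChooseSum p (n + 1) r =
      centeredChooseSum p n (r + 1) + 2 * centeredChooseSum p n r +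
        centeredChooseSum p n (r - 1) := by
  have hfin := summand_hasFiniteSupport hp n
  have hterm : ∀ j : ℤ, ichoose (2 * (n + 1)) ((n + 1 : ℕ) - p * j + r) =
      ichoose (2 * n) (n - p * j + (r + 1)) + 2 * ichoose (2 * n) (n - p * j + r) +
        ichoose (2 * n) (n - p * j + (r - 1)) := by
    intro j
    rw [mul_add_one, ichoose_add_two]
    push_cast
    ring_nf
  have hfin2 : Function.HasFiniteSupport fun j : ℤ => 2 * ichoose (2 * n) (n - p * j + r) :=
    (hfin r).mul_right _
  rw [centeredChooseSum, finsum_congr hterm,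
    finsum_add_distrib (by exact (hfin _).add hfin2) (hfin _), finsum_add_distrib (hfin _) hfin2,
    ← mul_finsum]
  rfl

lemma zero_zero {p : ℤ} (hp : p ≠ 0) : centeredChooseSum p 0 0 = 1 := by
  rw [centeredChooseSum,
    finsum_eq_single _ 0 fun j hj => ichoose_zero_left_of_ne (by simp [hp, hj])]
  simp [ichoose_zero_right]

lemma zero_of_not_dvd {p r : ℤ} (h : ¬ p ∣ r) : centeredChooseSum p 0 r = 0 :=
  finsum_eq_zero_of_forall_eq_zero fun j => ichoose_zero_left_of_ne fun hj =>
    h ⟨j, by push_cast at hj; omega⟩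

end centeredChooseSum

open centeredChooseSum in
theorem centeredChooseSum_five_sub_eq_fib (n : ℕ) :
    centeredChooseSum 5 n 0 - centeredChooseSum 5 n 2 = Nat.fib (2 * n + 1) ∧
      centeredChooseSum 5 n 1 - centeredChooseSum 5 n 2 = Nat.fib (2 * n) := by
  induction n with
  | zero =>
    norm_num [zero_zero, zero_of_not_dvd]
  | succ n ih =>
    have h5 : (5 : ℤ) ≠ 0 := by norm_num
    have hS₀ : centeredChooseSum 5 (n + 1) 0 =
        2 * centeredChooseSum 5 n 0 + 2 * centeredChooseSum 5 n 1 := by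
      rw [succ h5, zero_add, zero_sub, neg]
      ring
    have hS₁ : centeredChooseSum 5 (n + 1) 1 =
        centeredChooseSum 5 n 0 + 2 * centeredChooseSum 5 n 1 + centeredChooseSum 5 n 2 := by
      rw [succ h5, one_add_one_eq_two, sub_self]
      ring
    have hS₂ : centeredChooseSum 5 (n + 1) 2 =
        centeredChooseSum 5 n 1 + 3 * centeredChooseSum 5 n 2 := by
      rw [succ h5, show (2 : ℤ) + 1 = -2 + 5 by norm_num, add_period, neg,
        show (2 : ℤ) - 1 = 1 by norm_num]
      ring
    have hfib_even : Nat.fib (2 * (n + 1)) = Nat.fib (2 * n) + Nat.fib (2 * n + 1) := by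
      rw [mul_add_one, Nat.fib_add_two]
    have hfib_odd : Nat.fib (2 * (n + 1) + 1) = Nat.fib (2 * n + 1) + Nat.fib (2 * (n + 1)) :=
      Nat.fib_add_two
    rw [hS₀, hS₁, hS₂, hfib_odd, hfib_even]
    push_cast
    constructor <;> linarith [ih.1, ih.2]

/-- `F_{2n+1} = Σ_{j∈ℤ} [ C(2n, n−5j) − C(2n, n−5j−2) ]`. -/
theorem fib_odd_eq_finsum_choose' (n : ℕ) :
    (Nat.fib (2 * n + 1) : ℚ) =
      ∑ᶠ j : ℤ, (ichoose (2 * n) ((n : ℤ) - 5 * j)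
        - ichoose (2 * n) ((n : ℤ) - 5 * j - 2)) := by
  have hfin := centeredChooseSum.summand_hasFiniteSupport (p := 5) (by norm_num) n
  rw [← (centeredChooseSum_five_sub_eq_fib n).1, ← centeredChooseSum.neg 5 n 2,
    centeredChooseSum, centeredChooseSum, ← finsum_sub_distrib (hfin 0) (hfin (-2))]
  simp only [add_zero, ← sub_eq_add_neg]
end

section
/- For all integers p ≥ 2, r ≥ 0 and n ≥ k ≥ 1, the following identity holds in ℚ: Σ_{j=0}^{n} [ 1/(pj+1) ]·C(pj+1, j)·C(p(n−j)+r, n−j−k+1) = C(pn+r+1, n−k+1). -/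
/-!
The Raney numbers `R_c(m) = c/(pm+c)·C(pm+c, m)` satisfy the Pascal-type recurrence
`R_{c+1}(m+1) = R_c(m+1) + R_{c+p}(m)`, and `C(pm+c, m)`, viewed as a function of `c`,
satisfies the same recurrence by Pascal's rule. A double induction on `m` and `a` then gives
the convolution `Σ_{i+j=m} R_a(i)·C(pj+c, j) = C(pm+a+c, m)`. The theorem is its case
`a = 1`, `m = n-k+1`, `c = p(k-1)+r`; the summands with `j > n-k+1` vanish.
-/

/-- `R_c(m)`, the coefficient of `x^m` in `B(x)^c` where `B = 1 + x·B^p`. The `if` gives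
`R_0(0) = 1`, where the formula reads `0/0`. -/
def raney (p c m : ℕ) : ℚ :=
  if m = 0 then 1 else c / (p * m + c : ℕ) * (p * m + c).choose m

open Finset

lemma ichoose_natCast (m j : ℕ) : ichoose m j = m.choose j := by
  simp [ichoose]

lemma ichoose_of_neg (m : ℕ) {j : ℤ} (hj : j < 0) : ichoose m j = 0 := if_pos hj

@[simp]
lemma raney_zero_right (p c : ℕ) : raney p c 0 = 1 := by simp [raney]

lemma raney_zero_left (p : ℕ) {m : ℕ} (hm : m ≠ 0) : raney p 0 m = 0 := by simp [raney, hm]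

lemma raney_of_ne_zero (p : ℕ) {c m : ℕ} (h : p * m + c ≠ 0) :
    raney p c m = c / (p * m + c : ℕ) * (p * m + c).choose m := by
  rcases eq_or_ne m 0 with rfl | hm
  · have hc : (c : ℚ) ≠ 0 := by simpa using h
    simp [raney, hc]
  · rw [raney, if_neg hm]

lemma raney_one (p j : ℕ) : raney p 1 j = 1 / ((p : ℚ) * j + 1) * (p * j + 1).choose j := by
  rw [raney_of_ne_zero p (by omega)]
  push_cast
  rfl

lemma raney_succ_succ {p : ℕ} (hp : 0 < p) (c m : ℕ) :
    raney p (c + 1) (m + 1) = raney p c (m + 1) + raney p (c + p) m := by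
  set N := p * m + p + c with hN
  -- all three terms are rational multiples of `C(N, m)`
  have hN0 : (N : ℚ) ≠ 0 := by positivity
  have hmN : m ≤ N := by nlinarith
  have hupper : (N.choose (m + 1) : ℚ) = N.choose m * (N - m) / (m + 1) := by
    have := congrArg (Nat.cast (R := ℚ)) (Nat.choose_succ_right_eq N m)
    push_cast [Nat.cast_sub hmN] at this
    rw [eq_div_iff (by positivity), this]
  have hlower : ((N + 1).choose (m + 1) : ℚ) = (N + 1) * N.choose m / (m + 1) := by
    have := congrArg (Nat.cast (R := ℚ)) (Nat.add_one_mul_choose_eq N m)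
    push_cast at this
    rw [eq_div_iff (by positivity), this]
  rw [raney_of_ne_zero p (by positivity), raney_of_ne_zero p (by positivity),
    raney_of_ne_zero p (by positivity), show p * (m + 1) + (c + 1) = N + 1 by rw [hN]; ring,
    show p * (m + 1) + c = N by rw [hN]; ring, show p * m + (c + p) = N by rw [hN]; ring]
  push_cast
  rw [hupper, hlower]
  field_simp
  rw [hN]
  push_cast
  ring

lemma choose_mul_add_succ_succ (p c m : ℕ) :
    (p * (m + 1) + (c + 1)).choose (m + 1)
      = (p * (m + 1) + c).choose (m + 1) + (p * m + (c + p)).choose m := by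
  rw [show p * (m + 1) + (c + 1) = (p * m + (c + p)) + 1 by ring, Nat.choose_succ_succ',
    show p * (m + 1) + c = p * m + (c + p) by ring, add_comm]

theorem sum_antidiagonal_raney_mul_choose {p : ℕ} (hp : 0 < p) (m a c : ℕ) :
    ∑ ij ∈ antidiagonal m, raney p a ij.1 * (p * ij.2 + c).choose ij.2
      = ((p * m + (a + c)).choose m : ℚ) := by
  induction m generalizing a with
  | zero => simp
  | succ m ihm =>
    induction a with
    | zero =>
      simp [Nat.sum_antidiagonal_succ, raney_zero_left]
    | succ a iha =>
      rw [Nat.sum_antidiagonal_succ] at iha ⊢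
      simp only [raney_succ_succ hp, add_mul, sum_add_distrib, ihm (a + p), raney_zero_right]
      rw [show a + 1 + c = (a + c) + 1 by ring, choose_mul_add_succ_succ, Nat.cast_add,
        show a + p + c = (a + c) + p by ring]
      simp only [raney_zero_right] at iha
      linarith

/-- For `p ≥ 2`, `r ≥ 0`, `n ≥ k ≥ 1`:
`Σ_{j=0}^{n} (1/(pj+1))·C(pj+1, j)·C(p(n−j)+r, n−j−k+1) = C(pn+r+1, n−k+1)`. -/
theorem generalized_catalan_convolution (p r n k : ℕ)
    (hp : 2 ≤ p) (hk : 1 ≤ k) (hkn : k ≤ n) :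
    ∑ j ∈ Finset.range (n + 1),
        (1 / ((p : ℚ) * j + 1)) * ((p * j + 1).choose j : ℚ)
          * ichoose (p * (n - j) + r) ((n : ℤ) - j - k + 1)
      = ((p * n + r + 1).choose (n - k + 1) : ℚ) := by
  obtain ⟨k, rfl⟩ : ∃ k', k = k' + 1 := ⟨k - 1, by omega⟩
  obtain ⟨m, rfl⟩ : ∃ m, n = m + k := ⟨n - k, by omega⟩
  have key := sum_antidiagonal_raney_mul_choose (by omega : 0 < p) m 1 (p * k + r)
  rw [Nat.sum_antidiagonal_eq_sum_range_succ
    (fun i j ↦ raney p 1 i * ((p * j + (p * k + r)).choose j : ℚ))] at key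
  rw [show m + k - (k + 1) + 1 = m by omega,
    show p * (m + k) + r + 1 = p * m + (1 + (p * k + r)) by ring, ← key,
    ← sum_subset (range_subset_range.2 (by omega : m + 1 ≤ m + k + 1))]
  · refine sum_congr rfl fun j hj ↦ ?_
    have hjm : j ≤ m := Nat.lt_succ_iff.1 (mem_range.1 hj)
    rw [raney_one, show ((m + k : ℕ) : ℤ) - j - (k + 1 : ℕ) + 1 = (m - j : ℕ) by omega,
      ichoose_natCast, show p * (m + k - j) + r = p * (m - j) + (p * k + r) by
        rw [show m + k - j = m - j + k by omega]; ring]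
  · intro j _ hjm
    rw [ichoose_of_neg _ (by rw [mem_range, not_lt] at hjm; omega), mul_zero]
end
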